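/- Let x̄ ∈ F be a locally optimal solution of (MPSC). Assume that x̄ is an S-stationary point of (MPSC) and that MPSC-WCR holds at x̄. Then MPSC-WSONC holds at x̄: for every multiplier vector (λ, ρ, μ, ν) satisfying the S-stationarity system at x̄ and every d̃ ∈ C̃^MPSC_F(x̄), one has d̃ᵀ∇²ℓ(x̄)d̃ ≥ 0, where ℓ := f + Σ_i λ_i g_i + Σ_j ρ_j h_j + Σ_k μ_k G_k + Σ_k ν_k H_k. -/

import Mathlib

/-!
Under MPSC-WCR the gradients of the constraints that are active at `xb` have constant rank near
`xb`, so by the constant rank theorem every critical direction `d` is the velocity at `0` of a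
`C²` curve `ζ` through `xb` along which every active constraint keeps its value at `xb`. Such a
curve stays feasible, and the sign and complementarity conditions of S-stationarity make the
Lagrangian `ℓ` coincide with `f` along it, so `t ↦ ℓ (ζ t)` has a local minimum at `0`. As
`∇ℓ(xb) = 0`, the second derivative of this function at `0` is `dᵀ∇²ℓ(xb)d`, which is therefore
nonnegative.
-/

open Set Filter Topology Metric

noncomputable section

namespace MPSC

abbrev Vec (n : ℕ) := EuclideanSpace ℝ (Fin n)

variable {n m p l : ℕ}

open scoped Classical in
/-- Sum of a function over an index set (finite ambient type). -/
noncomputable def sumOver {α β : Type*} [Fintype α] [AddCommMonoid β]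
    (S : Set α) (v : α → β) : β :=
  ∑ a, if a ∈ S then v a else 0

/-- The feasible set of (MPSC). -/
def Feas (g : Fin m → Vec n → ℝ) (h : Fin p → Vec n → ℝ)
    (G H : Fin l → Vec n → ℝ) : Set (Vec n) :=
  {x | (∀ i, g i x ≤ 0) ∧ (∀ j, h j x = 0) ∧ ∀ k, G k x * H k x = 0}

/-- Index set of active inequality constraints. -/
def Ig (g : Fin m → Vec n → ℝ) (xb : Vec n) : Set (Fin m) := {i | g i xb = 0}

def IG (G H : Fin l → Vec n → ℝ) (xb : Vec n) : Set (Fin l) :=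
  {k | G k xb = 0 ∧ H k xb ≠ 0}

def IH (G H : Fin l → Vec n → ℝ) (xb : Vec n) : Set (Fin l) :=
  {k | G k xb ≠ 0 ∧ H k xb = 0}

def IGH (G H : Fin l → Vec n → ℝ) (xb : Vec n) : Set (Fin l) :=
  {k | G k xb = 0 ∧ H k xb = 0}

/-- (β1, β2) is a disjoint bipartition of I_GH. -/
def Partition (G H : Fin l → Vec n → ℝ) (xb : Vec n) (β1 β2 : Set (Fin l)) : Prop :=
  β1 ∩ β2 = ∅ ∧ β1 ∪ β2 = IGH G H xb

/-- Branch feasible set. -/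
def BranchFeas (g : Fin m → Vec n → ℝ) (h : Fin p → Vec n → ℝ)
    (G H : Fin l → Vec n → ℝ) (xb : Vec n) (β1 β2 : Set (Fin l)) : Set (Vec n) :=
  {x | (∀ i, g i x ≤ 0) ∧ (∀ j, h j x = 0) ∧
    (∀ k ∈ IG G H xb ∪ β1, G k x = 0) ∧ ∀ k ∈ IH G H xb ∪ β2, H k x = 0}

/-- Bouligand tangent cone, as defined in the paper. -/
def tangentCone (Ω : Set (Vec n)) (xb : Vec n) : Set (Vec n) :=
  {d | ∃ t : ℕ → ℝ, ∃ x : ℕ → Vec n, (∀ k, 0 ≤ t k) ∧ (∀ k, x k ∈ Ω) ∧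
    Tendsto x atTop (nhds xb) ∧ Tendsto (fun k => t k • (x k - xb)) atTop (nhds d)}

/-- MPSC linearization cone. -/
def LCone (g : Fin m → Vec n → ℝ) (h : Fin p → Vec n → ℝ)
    (G H : Fin l → Vec n → ℝ) (xb : Vec n) : Set (Vec n) :=
  {d | (∀ i ∈ Ig g xb, fderiv ℝ (g i) xb d ≤ 0) ∧ (∀ j, fderiv ℝ (h j) xb d = 0) ∧
    (∀ k ∈ IG G H xb, fderiv ℝ (G k) xb d = 0) ∧ (∀ k ∈ IH G H xb, fderiv ℝ (H k) xb d = 0) ∧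
    ∀ k ∈ IGH G H xb, fderiv ℝ (G k) xb d * fderiv ℝ (H k) xb d = 0}

/-- Branch linearization cone. -/
def BranchLCone (g : Fin m → Vec n → ℝ) (h : Fin p → Vec n → ℝ)
    (G H : Fin l → Vec n → ℝ) (xb : Vec n) (β1 β2 : Set (Fin l)) : Set (Vec n) :=
  {d | (∀ i ∈ Ig g xb, fderiv ℝ (g i) xb d ≤ 0) ∧ (∀ j, fderiv ℝ (h j) xb d = 0) ∧
    (∀ k ∈ IG G H xb ∪ β1, fderiv ℝ (G k) xb d = 0) ∧
    ∀ k ∈ IH G H xb ∪ β2, fderiv ℝ (H k) xb d = 0}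

/-- MPSC critical subspace. -/
def CritSubspace (g : Fin m → Vec n → ℝ) (h : Fin p → Vec n → ℝ)
    (G H : Fin l → Vec n → ℝ) (xb : Vec n) : Set (Vec n) :=
  {d | (∀ i ∈ Ig g xb, fderiv ℝ (g i) xb d = 0) ∧ (∀ j, fderiv ℝ (h j) xb d = 0) ∧
    (∀ k ∈ IG G H xb ∪ IGH G H xb, fderiv ℝ (G k) xb d = 0) ∧
    ∀ k ∈ IH G H xb ∪ IGH G H xb, fderiv ℝ (H k) xb d = 0}

/-- Rank (dimension of the span) of the family of gradients
{∇g_i(x)}_{i∈I1} ∪ {∇h_j(x)}_j ∪ {∇G_k(x)}_{k∈I3} ∪ {∇H_k(x)}_{k∈I4}. -/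
def gradRank (g : Fin m → Vec n → ℝ) (h : Fin p → Vec n → ℝ)
    (G H : Fin l → Vec n → ℝ) (I1 : Set (Fin m)) (I3 I4 : Set (Fin l)) (x : Vec n) : ℕ :=
  Module.finrank ℝ ↥(Submodule.span ℝ
    ((fun i => gradient (g i) x) '' I1 ∪ Set.range (fun j => gradient (h j) x) ∪
     (fun k => gradient (G k) x) '' I3 ∪ (fun k => gradient (H k) x) '' I4))

/-- MPSC-LICQ. -/
def LICQ (g : Fin m → Vec n → ℝ) (h : Fin p → Vec n → ℝ)
    (G H : Fin l → Vec n → ℝ) (xb : Vec n) : Prop :=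
  ∀ (lam : Fin m → ℝ) (ρ : Fin p → ℝ) (μ ν : Fin l → ℝ),
    (∀ i, i ∉ Ig g xb → lam i = 0) →
    (∀ k, k ∉ IG G H xb ∪ IGH G H xb → μ k = 0) →
    (∀ k, k ∉ IH G H xb ∪ IGH G H xb → ν k = 0) →
    ∑ i, lam i • gradient (g i) xb + ∑ j, ρ j • gradient (h j) xb +
      ∑ k, μ k • gradient (G k) xb + ∑ k, ν k • gradient (H k) xb = 0 →
    lam = 0 ∧ ρ = 0 ∧ μ = 0 ∧ ν = 0

/-- MPSC-RCRCQ. -/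
def RCRCQ (g : Fin m → Vec n → ℝ) (h : Fin p → Vec n → ℝ)
    (G H : Fin l → Vec n → ℝ) (xb : Vec n) : Prop :=
  ∃ ε > (0:ℝ), ∀ I1 : Set (Fin m), I1 ⊆ Ig g xb →
    ∀ I3 I4 : Set (Fin l), I3 ⊆ IGH G H xb → I4 ⊆ IGH G H xb →
      ∀ x : Vec n, ‖x - xb‖ < ε →
        gradRank g h G H I1 (I3 ∪ IG G H xb) (I4 ∪ IH G H xb) x =
        gradRank g h G H I1 (I3 ∪ IG G H xb) (I4 ∪ IH G H xb) xb

/-- MPSC-WCR. -/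
def WCR (g : Fin m → Vec n → ℝ) (h : Fin p → Vec n → ℝ)
    (G H : Fin l → Vec n → ℝ) (xb : Vec n) : Prop :=
  ∃ ε > (0:ℝ), ∀ x : Vec n, ‖x - xb‖ < ε →
    gradRank g h G H (Ig g xb) (IG G H xb ∪ IGH G H xb) (IH G H xb ∪ IGH G H xb) x =
    gradRank g h G H (Ig g xb) (IG G H xb ∪ IGH G H xb) (IH G H xb ∪ IGH G H xb) xb

/-- MPSC-PWCR. -/
def PWCR (g : Fin m → Vec n → ℝ) (h : Fin p → Vec n → ℝ)
    (G H : Fin l → Vec n → ℝ) (xb : Vec n) : Prop :=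
  ∀ β1 β2 : Set (Fin l), Partition G H xb β1 β2 →
    ∃ ε > (0:ℝ), ∀ x : Vec n, ‖x - xb‖ < ε →
      gradRank g h G H (Ig g xb) (IG G H xb ∪ β1) (IH G H xb ∪ β2) x =
      gradRank g h G H (Ig g xb) (IG G H xb ∪ β1) (IH G H xb ∪ β2) xb

/-- The index set I_g^- associated with a branch (β1, β2). -/
def IgMinus (g : Fin m → Vec n → ℝ) (h : Fin p → Vec n → ℝ)
    (G H : Fin l → Vec n → ℝ) (xb : Vec n) (β1 β2 : Set (Fin l)) : Set (Fin m) :=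
  {i | i ∈ Ig g xb ∧ ∃ (lam : Fin m → ℝ) (ρ : Fin p → ℝ) (μ ν : Fin l → ℝ),
    (∀ i', 0 ≤ lam i') ∧ (∀ i', i' ∉ Ig g xb \ {i} → lam i' = 0) ∧
    (∀ k, k ∉ IG G H xb ∪ β1 → μ k = 0) ∧ (∀ k, k ∉ IH G H xb ∪ β2 → ν k = 0) ∧
    -gradient (g i) xb = ∑ i', lam i' • gradient (g i') xb + ∑ j, ρ j • gradient (h j) xb +
      ∑ k, μ k • gradient (G k) xb + ∑ k, ν k • gradient (H k) xb}

/-- MPSC-PCRSC. -/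
def PCRSC (g : Fin m → Vec n → ℝ) (h : Fin p → Vec n → ℝ)
    (G H : Fin l → Vec n → ℝ) (xb : Vec n) : Prop :=
  ∀ β1 β2 : Set (Fin l), Partition G H xb β1 β2 →
    ∃ ε > (0:ℝ), ∀ x : Vec n, ‖x - xb‖ < ε →
      gradRank g h G H (IgMinus g h G H xb β1 β2) (IG G H xb ∪ β1) (IH G H xb ∪ β2) x =
      gradRank g h G H (IgMinus g h G H xb β1 β2) (IG G H xb ∪ β1) (IH G H xb ∪ β2) xb

/-- A twice differentiable arc on [0, δ) (one-sided at the endpoint 0),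
with first derivative ξ'. -/
def TwiceDiffArc (δ : ℝ) (ξ ξ' : ℝ → Vec n) : Prop :=
  (∀ t ∈ Ico (0:ℝ) δ, HasDerivWithinAt ξ (ξ' t) (Ico (0:ℝ) δ) t) ∧
  ∀ t ∈ Ico (0:ℝ) δ, DifferentiableWithinAt ℝ ξ' (Ico (0:ℝ) δ) t

/-- MPSC-SSOCQ. -/
def SSOCQ (g : Fin m → Vec n → ℝ) (h : Fin p → Vec n → ℝ)
    (G H : Fin l → Vec n → ℝ) (xb : Vec n) : Prop :=
  ∀ d ∈ LCone g h G H xb, d ≠ 0 →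
    ∃ δ > (0:ℝ), ∃ J K : Set (Fin l), J ⊆ IGH G H xb ∧ K ⊆ IGH G H xb ∧
      ∃ ξ ξ' : ℝ → Vec n, TwiceDiffArc δ ξ ξ' ∧
        (∀ t ∈ Ico (0:ℝ) δ, ξ t ∈ Feas g h G H) ∧
        ξ 0 = xb ∧ ξ' 0 = d ∧
        (∀ t ∈ Ico (0:ℝ) δ, ∀ i ∈ Ig g xb, fderiv ℝ (g i) xb d = 0 → g i (ξ t) = 0) ∧
        (∀ t ∈ Ico (0:ℝ) δ, ∀ k ∈ IG G H xb ∪ J, G k (ξ t) = 0) ∧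
        ∀ t ∈ Ico (0:ℝ) δ, ∀ k ∈ IH G H xb ∪ K, H k (ξ t) = 0

/-- MPSC-WSOCQ. -/
def WSOCQ (g : Fin m → Vec n → ℝ) (h : Fin p → Vec n → ℝ)
    (G H : Fin l → Vec n → ℝ) (xb : Vec n) : Prop :=
  ∀ d ∈ CritSubspace g h G H xb, d ≠ 0 →
    ∃ δ > (0:ℝ), ∃ J K : Set (Fin l), J ⊆ IGH G H xb ∧ K ⊆ IGH G H xb ∧
      ∃ ζ ζ' : ℝ → Vec n, TwiceDiffArc δ ζ ζ' ∧
        (∀ t ∈ Ico (0:ℝ) δ, ζ t ∈ Feas g h G H) ∧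
        ζ 0 = xb ∧ ζ' 0 = d ∧
        (∀ t ∈ Ico (0:ℝ) δ, ∀ i ∈ Ig g xb, g i (ζ t) = 0) ∧
        (∀ t ∈ Ico (0:ℝ) δ, ∀ k ∈ IG G H xb ∪ J, G k (ζ t) = 0) ∧
        ∀ t ∈ Ico (0:ℝ) δ, ∀ k ∈ IH G H xb ∪ K, H k (ζ t) = 0

/-- The S-stationarity system for multipliers (λ, ρ, μ, ν) at xb. -/
def SStationarySystem (f : Vec n → ℝ) (g : Fin m → Vec n → ℝ) (h : Fin p → Vec n → ℝ)
    (G H : Fin l → Vec n → ℝ) (xb : Vec n)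
    (lam : Fin m → ℝ) (ρ : Fin p → ℝ) (μ ν : Fin l → ℝ) : Prop :=
  (∀ i, 0 ≤ lam i) ∧ (∀ i, lam i * g i xb = 0) ∧
  (∀ k ∈ IH G H xb ∪ IGH G H xb, μ k = 0) ∧
  (∀ k ∈ IG G H xb ∪ IGH G H xb, ν k = 0) ∧
  gradient f xb + ∑ i, lam i • gradient (g i) xb + ∑ j, ρ j • gradient (h j) xb +
    ∑ k, μ k • gradient (G k) xb + ∑ k, ν k • gradient (H k) xb = 0

def SStationary (f : Vec n → ℝ) (g : Fin m → Vec n → ℝ) (h : Fin p → Vec n → ℝ)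
    (G H : Fin l → Vec n → ℝ) (xb : Vec n) : Prop :=
  ∃ (lam : Fin m → ℝ) (ρ : Fin p → ℝ) (μ ν : Fin l → ℝ),
    SStationarySystem f g h G H xb lam ρ μ ν

/-- The M-stationarity system for multipliers (λ, ρ, μ, ν) at xb. -/
def MStationarySystem (f : Vec n → ℝ) (g : Fin m → Vec n → ℝ) (h : Fin p → Vec n → ℝ)
    (G H : Fin l → Vec n → ℝ) (xb : Vec n)
    (lam : Fin m → ℝ) (ρ : Fin p → ℝ) (μ ν : Fin l → ℝ) : Prop :=
  (∀ i, 0 ≤ lam i) ∧ (∀ i, lam i * g i xb = 0) ∧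
  (∀ k ∈ IH G H xb, μ k = 0) ∧ (∀ k ∈ IG G H xb, ν k = 0) ∧
  (∀ k ∈ IGH G H xb, μ k * ν k = 0) ∧
  gradient f xb + ∑ i, lam i • gradient (g i) xb + ∑ j, ρ j • gradient (h j) xb +
    ∑ k, μ k • gradient (G k) xb + ∑ k, ν k • gradient (H k) xb = 0

def MStationary (f : Vec n → ℝ) (g : Fin m → Vec n → ℝ) (h : Fin p → Vec n → ℝ)
    (G H : Fin l → Vec n → ℝ) (xb : Vec n) : Prop :=
  ∃ (lam : Fin m → ℝ) (ρ : Fin p → ℝ) (μ ν : Fin l → ℝ),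
    MStationarySystem f g h G H xb lam ρ μ ν

/-- Local optimality for (MPSC). -/
def LocallyOptimal (f : Vec n → ℝ) (g : Fin m → Vec n → ℝ) (h : Fin p → Vec n → ℝ)
    (G H : Fin l → Vec n → ℝ) (xb : Vec n) : Prop :=
  xb ∈ Feas g h G H ∧ ∃ ε > (0:ℝ), ∀ x ∈ Feas g h G H, ‖x - xb‖ < ε → f xb ≤ f x

/-- Hessian quadratic form dᵀ∇²φ(x)d. -/
def hessForm (φ : Vec n → ℝ) (x d : Vec n) : ℝ :=
  iteratedFDeriv ℝ 2 φ x ![d, d]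

/-- The Lagrange function ℓ. -/
def lagr (f : Vec n → ℝ) (g : Fin m → Vec n → ℝ) (h : Fin p → Vec n → ℝ)
    (G H : Fin l → Vec n → ℝ)
    (lam : Fin m → ℝ) (ρ : Fin p → ℝ) (μ ν : Fin l → ℝ) : Vec n → ℝ :=
  fun x => f x + ∑ i, lam i * g i x + ∑ j, ρ j * h j x +
    ∑ k, μ k * G k x + ∑ k, ν k * H k x

/-- Constraint-violation residual. -/
def residual (g : Fin m → Vec n → ℝ) (h : Fin p → Vec n → ℝ)
    (G H : Fin l → Vec n → ℝ) (x : Vec n) : ℝ :=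
  Real.sqrt (∑ i, max (g i x) 0 ^ 2 + ∑ j, h j x ^ 2 + ∑ k, min (G k x ^ 2) (H k x ^ 2))

/-- Penalty function P_κ. -/
def Pen (f : Vec n → ℝ) (g : Fin m → Vec n → ℝ) (h : Fin p → Vec n → ℝ)
    (G H : Fin l → Vec n → ℝ) (κ : ℝ) (x : Vec n) : ℝ :=
  f x + κ * residual g h G H x

/-- MPSC piecewise second-order quasi-normality. -/
def PSOQN (g : Fin m → Vec n → ℝ) (h : Fin p → Vec n → ℝ)
    (G H : Fin l → Vec n → ℝ) (xb : Vec n) : Prop :=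
  ∀ β1 β2 : Set (Fin l), Partition G H xb β1 β2 →
    ¬ ∃ (lam : Fin m → ℝ) (ρ : Fin p → ℝ) (μ ν : Fin l → ℝ),
      (∀ i, 0 ≤ lam i) ∧
      (∀ k, k ∉ IG G H xb ∪ β1 → μ k = 0) ∧ (∀ k, k ∉ IH G H xb ∪ β2 → ν k = 0) ∧
      ¬(lam = 0 ∧ ρ = 0 ∧ μ = 0 ∧ ν = 0) ∧
      (∑ i, lam i • gradient (g i) xb + ∑ j, ρ j • gradient (h j) xb +
        ∑ k, μ k • gradient (G k) xb + ∑ k, ν k • gradient (H k) xb = 0) ∧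
      (∀ d : Vec n, (∀ i ∈ Ig g xb, fderiv ℝ (g i) xb d = 0) →
        (∀ j, fderiv ℝ (h j) xb d = 0) →
        (∀ k ∈ IG G H xb ∪ β1, fderiv ℝ (G k) xb d = 0) →
        (∀ k ∈ IH G H xb ∪ β2, fderiv ℝ (H k) xb d = 0) →
        0 ≤ ∑ i, lam i * hessForm (g i) xb d + ∑ j, ρ j * hessForm (h j) xb d +
          ∑ k, μ k * hessForm (G k) xb d + ∑ k, ν k * hessForm (H k) xb d) ∧
      ∃ xs : ℕ → Vec n, Tendsto xs atTop (nhds xb) ∧ ∀ s,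
        (∀ i, 0 < lam i → 0 < lam i * g i (xs s)) ∧
        (∀ j, ρ j ≠ 0 → 0 < ρ j * h j (xs s)) ∧
        (∀ k, μ k ≠ 0 → 0 < μ k * G k (xs s)) ∧
        (∀ k, ν k ≠ 0 → 0 < ν k * H k (xs s))

open scoped RealInnerProductSpace ContDiff

theorem _root_.IsLocalMin.nonneg_of_hasDerivAt_of_hasDerivAt {ψ ψ' : ℝ → ℝ} {a c : ℝ}
    (hmin : IsLocalMin ψ a) (hψ : ∀ᶠ t in 𝓝 a, HasDerivAt ψ (ψ' t) t)
    (hψ' : HasDerivAt ψ' c a) : 0 ≤ c := by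
  -- if `c < 0`, the second derivative test makes `a` a local maximum as well, so `ψ` is locally
  -- constant and `c = 0`
  by_contra! hc
  have hderiv : deriv ψ =ᶠ[𝓝 a] ψ' := hψ.mono fun t ht => ht.deriv
  have hmax : IsLocalMax ψ a :=
    isLocalMax_of_deriv_deriv_neg (by rwa [(hψ'.congr_of_eventuallyEq hderiv).deriv])
      hmin.deriv_eq_zero hψ.self_of_nhds.continuousAt
  have hconst : ψ =ᶠ[𝓝 a] fun _ => ψ a :=
    (hmin.and hmax).mono fun t ht => le_antisymm ht.2 ht.1
  have hzero : ψ' =ᶠ[𝓝 a] fun _ => 0 := hderiv.symm.trans (by simpa using hconst.deriv)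
  exact hc.ne ((hψ'.congr_of_eventuallyEq hzero.symm).unique (hasDerivAt_const a 0))

theorem fderiv_fderiv_apply_nonneg_of_isLocalMin_comp {E : Type*} [NormedAddCommGroup E]
    [NormedSpace ℝ E] {φ : E → ℝ} {ζ : ℝ → E} {x d : E} (hφ : ContDiffAt ℝ 2 φ x)
    (hζ : ContDiffAt ℝ 2 ζ 0) (hζ0 : ζ 0 = x) (hζd : HasDerivAt ζ d 0)
    (hcrit : fderiv ℝ φ x = 0) (hmin : IsLocalMin (φ ∘ ζ) 0) :
    0 ≤ fderiv ℝ (fderiv ℝ φ) x d d := by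
  subst hζ0
  have hφ' : ∀ᶠ t in 𝓝 0, DifferentiableAt ℝ φ (ζ t) :=
    hζ.continuousAt.eventually <|
      (hφ.eventually (by simp)).mono fun y hy => hy.differentiableAt (by simp)
  have hζ' : ∀ᶠ t in 𝓝 0, DifferentiableAt ℝ ζ t :=
    (hζ.eventually (by simp)).mono fun t ht => ht.differentiableAt (by simp)
  refine IsLocalMin.nonneg_of_hasDerivAt_of_hasDerivAt hmin
    (ψ' := fun t => fderiv ℝ φ (ζ t) (deriv ζ t)) ?_ ?_
  · filter_upwards [hφ', hζ'] with t h1 h2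
    exact h1.hasFDerivAt.comp_hasDerivAt t h2.hasDerivAt
  · have h1 : HasDerivAt (fun t => fderiv ℝ φ (ζ t)) (fderiv ℝ (fderiv ℝ φ) (ζ 0) d) 0 :=
      ((hφ.fderiv_right (m := 1) le_rfl).differentiableAt
        one_ne_zero).hasFDerivAt.comp_hasDerivAt 0 hζd
    -- `deriv ζ` unfolds to `fun t => fderiv ℝ ζ t 1`
    have h2 : HasDerivAt (deriv ζ) (deriv (deriv ζ) 0) 0 :=
      (((hζ.fderiv_right (m := 1) le_rfl).differentiableAt one_ne_zero).clm_apply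
        (differentiableAt_const (1 : ℝ))).hasDerivAt
    simpa [hζd.deriv, hcrit] using h1.clm_apply h2

theorem _root_.LinearIndependent.eq_zero_of_inner_sum_eq_zero {E κ : Type*}
    [NormedAddCommGroup E] [InnerProductSpace ℝ E] [Fintype κ] {w : κ → E}
    (hw : LinearIndependent ℝ w) {y : κ → ℝ} (hy : ∀ j, ⟪w j, ∑ i, y i • w i⟫ = 0) :
    y = 0 := by
  have hsum : ∑ i, y i • w i = 0 := by
    rw [← inner_self_eq_zero (𝕜 := ℝ), sum_inner]
    simp [real_inner_smul_left, hy]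
  exact funext (Fintype.linearIndependent_iff.1 hw y hsum)

theorem _root_.ContinuousLinearMap.isInvertible_of_injective {V : Type*} [NormedAddCommGroup V]
    [NormedSpace ℝ V] [FiniteDimensional ℝ V] {A : V →L[ℝ] V} (hA : Function.Injective A) :
    A.IsInvertible :=
  ⟨(LinearEquiv.ofInjectiveEndo (A : V →ₗ[ℝ] V) hA).toContinuousLinearEquiv, rfl⟩

theorem inner_eq_zero_of_mem_span {E : Type*} [NormedAddCommGroup E] [InnerProductSpace ℝ E]
    {s : Set E} {u v : E} (hs : ∀ w ∈ s, ⟪w, u⟫ = 0)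
    (hv : v ∈ Submodule.span ℝ s) : ⟪v, u⟫ = 0 :=
  Submodule.mem_orthogonal_singleton_iff_inner_left.1 <|
    Submodule.span_le.2
      (fun w hw => Submodule.mem_orthogonal_singleton_iff_inner_left.2 (hs w hw)) hv

section ConstantRank

variable {E : Type*} [NormedAddCommGroup E] [InnerProductSpace ℝ E] [CompleteSpace E]

theorem exists_curve_of_linearIndependent_gradient {κ : Type*} [Fintype κ] {ψ : κ → E → ℝ}
    {x d : E} {n : ℕ∞ω} (hn : n ≠ 0) (hψ : ∀ j, ContDiffAt ℝ n (ψ j) x)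
    (hind : LinearIndependent ℝ fun j => gradient (ψ j) x) (hd : ∀ j, fderiv ℝ (ψ j) x d = 0) :
    ∃ ζ : ℝ → E, ContDiffAt ℝ n ζ 0 ∧ ζ 0 = x ∧ HasDerivAt ζ d 0 ∧
      ∀ᶠ t in 𝓝 0, ∀ j, ψ j (ζ t) = ψ j x := by
  set w := fun j => gradient (ψ j) x
  -- the curve is `x + t • d + ∑ j, y j t • w j`, with `y` given by the implicit function theorem
  set Θ : ℝ × (κ → ℝ) →L[ℝ] E := (ContinuousLinearMap.fst ℝ ℝ (κ → ℝ)).smulRight d +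
    ∑ j, ((ContinuousLinearMap.proj j).comp (ContinuousLinearMap.snd ℝ ℝ (κ → ℝ))).smulRight (w j)
  have hΘ : ∀ q, Θ q = q.1 • d + ∑ j, q.2 j • w j := fun q => by simp [Θ]
  set F : ℝ × (κ → ℝ) → κ → ℝ := fun q j => ψ j (x + Θ q)
  have hF : ContDiffAt ℝ n F 0 := contDiffAt_pi.2 fun j => by
    have hψj : ContDiffAt ℝ n (ψ j) (x + Θ 0) := by simpa using hψ j
    exact hψj.comp 0 (contDiffAt_const.add Θ.contDiff.contDiffAt)
  have hF' : HasFDerivAt F (ContinuousLinearMap.pi fun j => fderiv ℝ (ψ j) x ∘L Θ) 0 :=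
    hasFDerivAt_pi.2 fun j => by
      have hψj : HasFDerivAt (ψ j) (fderiv ℝ (ψ j) x) (x + Θ 0) := by
        simpa using ((hψ j).differentiableAt hn).hasFDerivAt
      exact hψj.comp 0 (Θ.hasFDerivAt.const_add x)
  have hinv : (fderiv ℝ F 0 ∘L .inr ℝ ℝ (κ → ℝ)).IsInvertible := by
    refine ContinuousLinearMap.isInvertible_of_injective ((injective_iff_map_eq_zero _).2
      fun y hy => hind.eq_zero_of_inner_sum_eq_zero fun j => ?_)
    have := congrFun hy j
    rw [inner_sum]
    simpa [hF'.fderiv, hΘ, real_inner_smul_right, w, inner_gradient_left] using this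
  have hleft : fderiv ℝ F 0 ∘L .inl ℝ ℝ (κ → ℝ) = 0 := by
    ext t
    simp [hF'.fderiv, hΘ, hd]
  set y := hF.implicitFunction hn hinv
  have hy0 : y 0 = 0 := hF.implicitFunction_apply_self hn hinv
  have hy : HasDerivAt y 0 0 := by
    have := (hF.hasStrictFDerivAt_implicitFunction hn hinv).hasFDerivAt.hasDerivAt
    simpa [hleft] using this
  refine ⟨fun t => x + Θ (t, y t), ?_, by simp [hy0, hΘ], ?_, ?_⟩
  · exact contDiffAt_const.add (Θ.contDiff.contDiffAt.comp 0
      (contDiffAt_id.prodMk (hF.contDiffAt_implicitFunction hn hinv)))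
  · have := (Θ.hasFDerivAt.comp_hasDerivAt 0 ((hasDerivAt_id 0).prodMk hy)).const_add x
    simpa [hΘ] using this
  · filter_upwards [hF.eventually_apply_implicitFunction hn hinv] with t ht j
    simpa [F] using congrFun ht j

theorem eventually_eq_of_eventually_hasDerivAt_zero {F : Type*} [NormedAddCommGroup F]
    [NormedSpace ℝ F] {f : ℝ → F} {a : ℝ} (h : ∀ᶠ t in 𝓝 a, HasDerivAt f 0 t) :
    ∀ᶠ t in 𝓝 a, f t = f a := by
  obtain ⟨ε, hε, hball⟩ := Metric.eventually_nhds_iff_ball.1 h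
  filter_upwards [ball_mem_nhds a hε] with t ht
  exact isOpen_ball.is_const_of_deriv_eq_zero (convex_ball a ε).isPreconnected
    (fun s hs => (hball s hs).differentiableAt.differentiableWithinAt)
    (fun s hs => (hball s hs).deriv) ht (mem_ball_self hε)

theorem eventually_mem_span_of_finrank_eq {X F ι κ : Type*} [TopologicalSpace X]
    [NormedAddCommGroup F] [NormedSpace ℝ F] [Finite ι] [Fintype κ] {v : ι → X → F} {x : X}
    (hv : ∀ i, ContinuousAt (v i) x) (a : κ → ι)
    (hspan : Submodule.span ℝ (range fun j => v (a j) x) =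
      Submodule.span ℝ (range fun i => v i x))
    (hind : LinearIndependent ℝ fun j => v (a j) x)
    (hrank : ∀ᶠ y in 𝓝 x, Module.finrank ℝ (Submodule.span ℝ (range fun i => v i y)) =
      Module.finrank ℝ (Submodule.span ℝ (range fun i => v i x))) :
    ∀ᶠ y in 𝓝 x, ∀ i, v i y ∈ Submodule.span ℝ (range fun j => v (a j) y) := by
  have hind' : ∀ᶠ y in 𝓝 x, LinearIndependent ℝ fun j => v (a j) y :=
    (continuousAt_pi.2 fun j => hv (a j) : ContinuousAt (fun y j => v (a j) y) x).eventually
      (LinearIndependent.eventually hind)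
  filter_upwards [hind', hrank] with y hy hry i
  have := FiniteDimensional.span_of_finite ℝ (Set.finite_range fun i => v i y)
  have hle : Submodule.span ℝ (range fun j => v (a j) y) ≤
      Submodule.span ℝ (range fun i => v i y) :=
    Submodule.span_mono (range_comp_subset_range a fun i => v i y)
  have heq := Submodule.eq_of_le_of_finrank_eq hle <| by
    rw [finrank_span_eq_card hy, hry, ← hspan, finrank_span_eq_card hind]
  exact heq ▸ Submodule.subset_span (mem_range_self i)

theorem exists_curve_of_eventually_finrank_eq {ι : Type*} [Finite ι] {φ : ι → E → ℝ} {x d : E}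
    {n : ℕ∞ω} (hn : n ≠ 0) (hφ : ∀ i, ContDiff ℝ n (φ i))
    (hrank : ∀ᶠ y in 𝓝 x,
      Module.finrank ℝ (Submodule.span ℝ (range fun i => gradient (φ i) y)) =
        Module.finrank ℝ (Submodule.span ℝ (range fun i => gradient (φ i) x)))
    (hd : ∀ i, fderiv ℝ (φ i) x d = 0) :
    ∃ ζ : ℝ → E, ContDiffAt ℝ n ζ 0 ∧ ζ 0 = x ∧ HasDerivAt ζ d 0 ∧
      ∀ᶠ t in 𝓝 0, ∀ i, φ i (ζ t) = φ i x := by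
  obtain ⟨κ, a, ha, hspan, hind⟩ := exists_linearIndependent' ℝ fun i => gradient (φ i) x
  have : Finite κ := .of_injective a ha
  have := Fintype.ofFinite κ
  obtain ⟨ζ, hζ, hζ0, hζd, hconst⟩ := exists_curve_of_linearIndependent_gradient hn
    (fun j => (hφ (a j)).contDiffAt) hind fun j => hd (a j)
  have hmem := eventually_mem_span_of_finrank_eq (v := fun i => gradient (φ i)) (fun i =>
    ((InnerProductSpace.toDual ℝ E).symm.continuous.comp
      ((hφ i).continuous_fderiv hn)).continuousAt) a hspan hind hrank
  have hdiff : ∀ᶠ t in 𝓝 0, HasDerivAt ζ (deriv ζ t) t :=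
    ((hζ.of_le (ENat.one_le_iff_ne_zero_withTop.2 hn)).eventually (by simp)).mono
      fun t ht => (ht.differentiableAt one_ne_zero).hasDerivAt
  have hcomp : ∀ i, ∀ᶠ t in 𝓝 0,
      HasDerivAt (φ i ∘ ζ) ⟪gradient (φ i) (ζ t), deriv ζ t⟫ t :=
    fun i => hdiff.mono fun t ht => by
      simpa [inner_gradient_left] using
        (((hφ i).differentiable hn _).hasFDerivAt.comp_hasDerivAt t ht)
  -- the gradients of the `φ (a j)` are orthogonal to `ζ'` since `φ (a j) ∘ ζ` is constant,
  -- and near `x` they span all the gradients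
  have hzero : ∀ i, ∀ᶠ t in 𝓝 0, HasDerivAt (φ i ∘ ζ) 0 t := fun i => by
    filter_upwards [hconst.eventually_nhds, hζ.continuousAt.eventually (by rwa [hζ0]),
      hcomp i, eventually_all.2 hcomp] with t hct hmt hi hj
    refine hi.congr_deriv (inner_eq_zero_of_mem_span ?_ (hmt i))
    rintro _ ⟨j, rfl⟩
    exact (hj (a j)).unique ((hasDerivAt_const t (φ (a j) x)).congr_of_eventuallyEq
      (hct.mono fun s hs => hs j))
  refine ⟨ζ, hζ, hζ0, hζd, eventually_all.2 fun i => ?_⟩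
  simpa [hζ0] using eventually_eq_of_eventually_hasDerivAt_zero (hzero i)

end ConstantRank

section ActiveConstraints

variable {f : Vec n → ℝ} {g : Fin m → Vec n → ℝ} {h : Fin p → Vec n → ℝ}
  {G H : Fin l → Vec n → ℝ} {xb x : Vec n} {lam : Fin m → ℝ} {ρ : Fin p → ℝ} {μ ν : Fin l → ℝ}

theorem mem_IG_union_IGH_iff {k : Fin l} : k ∈ IG G H xb ∪ IGH G H xb ↔ G k xb = 0 := by
  simp only [IG, IGH, mem_union, mem_ofPred_eq]
  tauto

theorem mem_IH_union_IGH_iff {k : Fin l} : k ∈ IH G H xb ∪ IGH G H xb ↔ H k xb = 0 := by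
  simp only [IH, IGH, mem_union, mem_ofPred_eq]
  tauto

def activeConstraints (g : Fin m → Vec n → ℝ) (h : Fin p → Vec n → ℝ) (G H : Fin l → Vec n → ℝ)
    (xb : Vec n) :
    Ig g xb ⊕ Fin p ⊕ ↥(IG G H xb ∪ IGH G H xb) ⊕ ↥(IH G H xb ∪ IGH G H xb) → Vec n → ℝ :=
  Sum.elim (fun i => g i) (Sum.elim h (Sum.elim (fun k => G k) fun k => H k))

theorem contDiff_activeConstraints {r : ℕ∞ω} (hg : ∀ i, ContDiff ℝ r (g i))
    (hh : ∀ j, ContDiff ℝ r (h j)) (hG : ∀ k, ContDiff ℝ r (G k))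
    (hH : ∀ k, ContDiff ℝ r (H k)) : ∀ i, ContDiff ℝ r (activeConstraints g h G H xb i) := by
  rintro (i | j | k | k)
  exacts [hg i, hh j, hG k, hH k]

theorem range_gradient_activeConstraints (x : Vec n) :
    range (fun i => gradient (activeConstraints g h G H xb i) x) =
      (fun i => gradient (g i) x) '' Ig g xb ∪ range (fun j => gradient (h j) x) ∪
        (fun k => gradient (G k) x) '' (IG G H xb ∪ IGH G H xb) ∪
        (fun k => gradient (H k) x) '' (IH G H xb ∪ IGH G H xb) := by
  ext v
  simp [activeConstraints, Sum.exists, or_assoc]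

theorem WCR.eventually_finrank_eq (hcq : WCR g h G H xb) :
    ∀ᶠ x in 𝓝 xb,
      Module.finrank ℝ
          (Submodule.span ℝ (range fun i => gradient (activeConstraints g h G H xb i) x)) =
        Module.finrank ℝ
          (Submodule.span ℝ (range fun i => gradient (activeConstraints g h G H xb i) xb)) := by
  obtain ⟨ε, hε, hrank⟩ := hcq
  filter_upwards [ball_mem_nhds xb hε] with x hx
  rw [range_gradient_activeConstraints, range_gradient_activeConstraints]
  exact hrank x (mem_ball_iff_norm.1 hx)

theorem fderiv_activeConstraints_eq_zero {d : Vec n} (hd : d ∈ CritSubspace g h G H xb) :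
    ∀ i, fderiv ℝ (activeConstraints g h G H xb i) xb d = 0 := by
  obtain ⟨hdg, hdh, hdG, hdH⟩ := hd
  rintro (i | j | k | k)
  exacts [hdg i i.2, hdh j, hdG k k.2, hdH k k.2]

theorem eq_zero_of_activeConstraints_eq (hxb : xb ∈ Feas g h G H)
    (hx : ∀ i, activeConstraints g h G H xb i x = activeConstraints g h G H xb i xb) :
    (∀ i ∈ Ig g xb, g i x = 0) ∧ (∀ j, h j x = 0) ∧ (∀ k, G k xb = 0 → G k x = 0) ∧
      ∀ k, H k xb = 0 → H k x = 0 :=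
  ⟨fun i hi => (hx (.inl ⟨i, hi⟩)).trans hi, fun j => (hx (.inr (.inl j))).trans (hxb.2.1 j),
    fun k hk => (hx (.inr (.inr (.inl ⟨k, mem_IG_union_IGH_iff.2 hk⟩)))).trans hk,
    fun k hk => (hx (.inr (.inr (.inr ⟨k, mem_IH_union_IGH_iff.2 hk⟩)))).trans hk⟩

theorem mem_Feas_of_activeConstraints_eq (hxb : xb ∈ Feas g h G H)
    (hx : ∀ i, activeConstraints g h G H xb i x = activeConstraints g h G H xb i xb)
    (hinactive : ∀ i ∉ Ig g xb, g i x ≤ 0) : x ∈ Feas g h G H := by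
  obtain ⟨hg, hh, hG, hH⟩ := eq_zero_of_activeConstraints_eq hxb hx
  refine ⟨fun i => ?_, hh, fun k => ?_⟩
  · by_cases hi : i ∈ Ig g xb
    exacts [(hg i hi).le, hinactive i hi]
  · rcases mul_eq_zero.1 (hxb.2.2 k) with hk | hk
    · simp [hG k hk]
    · simp [hH k hk]

theorem eventually_mem_Feas {α : Type*} {L : Filter α} {ζ : α → Vec n}
    (hg : ∀ i, Continuous (g i)) (hxb : xb ∈ Feas g h G H) (hζ : Tendsto ζ L (𝓝 xb))
    (hact : ∀ᶠ t in L, ∀ i,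
      activeConstraints g h G H xb i (ζ t) = activeConstraints g h G H xb i xb) :
    ∀ᶠ t in L, ζ t ∈ Feas g h G H := by
  have hinactive : ∀ᶠ t in L, ∀ i ∉ Ig g xb, g i (ζ t) ≤ 0 := eventually_all.2 fun i => by
    by_cases hi : i ∈ Ig g xb
    · exact .of_forall fun _ h' => absurd hi h'
    · exact (((hg i).tendsto xb).comp hζ |>.eventually_lt_const
        (lt_of_le_of_ne (hxb.1 i) hi)).mono fun _ ht _ => ht.le
  filter_upwards [hinactive, hact] with t h1 h2
  exact mem_Feas_of_activeConstraints_eq hxb h2 h1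

theorem lagr_eq_of_activeConstraints_eq (hxb : xb ∈ Feas g h G H)
    (hsys : SStationarySystem f g h G H xb lam ρ μ ν)
    (hx : ∀ i, activeConstraints g h G H xb i x = activeConstraints g h G H xb i xb) :
    lagr f g h G H lam ρ μ ν x = f x := by
  obtain ⟨hg, hh, hG, hH⟩ := eq_zero_of_activeConstraints_eq hxb hx
  obtain ⟨-, hcompl, hμ, hν, -⟩ := hsys
  have hlam : ∀ i, lam i * g i x = 0 := fun i => by
    by_cases hi : g i xb = 0
    · simp [hg i hi]
    · simp [(mul_eq_zero.1 (hcompl i)).resolve_right hi]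
  have hμG : ∀ k, μ k * G k x = 0 := fun k => by
    by_cases hk : G k xb = 0
    · simp [hG k hk]
    · simp [hμ k (mem_IH_union_IGH_iff.2 ((mul_eq_zero.1 (hxb.2.2 k)).resolve_left hk))]
  have hνH : ∀ k, ν k * H k x = 0 := fun k => by
    by_cases hk : H k xb = 0
    · simp [hH k hk]
    · simp [hν k (mem_IG_union_IGH_iff.2 ((mul_eq_zero.1 (hxb.2.2 k)).resolve_right hk))]
  simp [lagr, hlam, hh, hμG, hνH]

theorem LocallyOptimal.eventually_le (hopt : LocallyOptimal f g h G H xb) :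
    ∀ᶠ x in 𝓝 xb, x ∈ Feas g h G H → f xb ≤ f x := by
  obtain ⟨-, ε, hε, hmin⟩ := hopt
  filter_upwards [ball_mem_nhds xb hε] with x hx hxF
  exact hmin x hxF (mem_ball_iff_norm.1 hx)

theorem contDiff_lagr {r : ℕ∞ω} (hf : ContDiff ℝ r f) (hg : ∀ i, ContDiff ℝ r (g i))
    (hh : ∀ j, ContDiff ℝ r (h j)) (hG : ∀ k, ContDiff ℝ r (G k))
    (hH : ∀ k, ContDiff ℝ r (H k)) : ContDiff ℝ r (lagr f g h G H lam ρ μ ν) := by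
  unfold lagr
  fun_prop

theorem hasFDerivAt_lagr (hf : DifferentiableAt ℝ f x) (hg : ∀ i, DifferentiableAt ℝ (g i) x)
    (hh : ∀ j, DifferentiableAt ℝ (h j) x) (hG : ∀ k, DifferentiableAt ℝ (G k) x)
    (hH : ∀ k, DifferentiableAt ℝ (H k) x) :
    HasFDerivAt (lagr f g h G H lam ρ μ ν)
      (fderiv ℝ f x + ∑ i, lam i • fderiv ℝ (g i) x + ∑ j, ρ j • fderiv ℝ (h j) x +
        ∑ k, μ k • fderiv ℝ (G k) x + ∑ k, ν k • fderiv ℝ (H k) x) x := by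
  refine ((((hf.hasFDerivAt.add
    (HasFDerivAt.sum fun i _ => (hg i).hasFDerivAt.const_mul (lam i))).add
    (HasFDerivAt.sum fun j _ => (hh j).hasFDerivAt.const_mul (ρ j))).add
    (HasFDerivAt.sum fun k _ => (hG k).hasFDerivAt.const_mul (μ k))).add
    (HasFDerivAt.sum fun k _ => (hH k).hasFDerivAt.const_mul (ν k))).congr_of_eventuallyEq
    (.of_forall fun y => ?_)
  simp [lagr, Finset.sum_apply]

theorem fderiv_lagr_eq_zero (hf : DifferentiableAt ℝ f xb)
    (hg : ∀ i, DifferentiableAt ℝ (g i) xb) (hh : ∀ j, DifferentiableAt ℝ (h j) xb)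
    (hG : ∀ k, DifferentiableAt ℝ (G k) xb) (hH : ∀ k, DifferentiableAt ℝ (H k) xb)
    (hsys : SStationarySystem f g h G H xb lam ρ μ ν) :
    fderiv ℝ (lagr f g h G H lam ρ μ ν) xb = 0 := by
  rw [(hasFDerivAt_lagr hf hg hh hG hH).fderiv]
  ext v
  have := congrArg (⟪·, v⟫) hsys.2.2.2.2
  simpa [inner_add_left, sum_inner, real_inner_smul_left, inner_gradient_left] using this

theorem hessForm_eq_fderiv_fderiv (φ : Vec n → ℝ) (x d : Vec n) :
    hessForm φ x d = fderiv ℝ (fderiv ℝ φ) x d d := by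
  simp [hessForm, iteratedFDeriv_two_apply]

end ActiveConstraints

theorem wsonc_under_wcr_general {n m p l : ℕ} (f : Vec n → ℝ) (g : Fin m → Vec n → ℝ)
    (h : Fin p → Vec n → ℝ) (G H : Fin l → Vec n → ℝ)
    (hf : ContDiff ℝ 2 f) (hg : ∀ i, ContDiff ℝ 2 (g i)) (hh : ∀ j, ContDiff ℝ 2 (h j))
    (hG : ∀ k, ContDiff ℝ 2 (G k)) (hH : ∀ k, ContDiff ℝ 2 (H k))
    (xb : Vec n)
    (hopt : LocallyOptimal f g h G H xb)
    (hcq : WCR g h G H xb) :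
    ∀ (lam : Fin m → ℝ) (ρ : Fin p → ℝ) (μ ν : Fin l → ℝ),
      SStationarySystem f g h G H xb lam ρ μ ν →
      ∀ d ∈ CritSubspace g h G H xb,
        0 ≤ hessForm (lagr f g h G H lam ρ μ ν) xb d := by
  intro lam ρ μ ν hsys d hd
  have hxb := hopt.1
  obtain ⟨ζ, hζ, hζ0, hζd, hact⟩ := exists_curve_of_eventually_finrank_eq two_ne_zero
    (contDiff_activeConstraints hg hh hG hH) hcq.eventually_finrank_eq
    (fderiv_activeConstraints_eq_zero hd)
  have hζxb : Tendsto ζ (𝓝 0) (𝓝 xb) := hζ0 ▸ hζ.continuousAt.tendsto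
  have hmin : IsLocalMin (lagr f g h G H lam ρ μ ν ∘ ζ) 0 := by
    filter_upwards [hζxb.eventually hopt.eventually_le,
      eventually_mem_Feas (fun i => (hg i).continuous) hxb hζxb hact, hact] with t hle hF hc
    simp only [Function.comp, hζ0, lagr_eq_of_activeConstraints_eq hxb hsys hc,
      lagr_eq_of_activeConstraints_eq hxb hsys fun _ => rfl]
    exact hle hF
  have hdiff : ∀ φ : Vec n → ℝ, ContDiff ℝ 2 φ → DifferentiableAt ℝ φ xb :=
    fun φ hφ => hφ.differentiable two_ne_zero xb
  rw [hessForm_eq_fderiv_fderiv]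
  refine fderiv_fderiv_apply_nonneg_of_isLocalMin_comp
    (contDiff_lagr hf hg hh hG hH).contDiffAt hζ hζ0 hζd ?_ hmin
  exact fderiv_lagr_eq_zero (hdiff f hf) (fun i => hdiff _ (hg i)) (fun j => hdiff _ (hh j))
    (fun k => hdiff _ (hG k)) (fun k => hdiff _ (hH k)) hsys

theorem wsonc_under_wcr {n m p l : ℕ} (f : Vec n → ℝ) (g : Fin m → Vec n → ℝ)
    (h : Fin p → Vec n → ℝ) (G H : Fin l → Vec n → ℝ)
    (hf : ContDiff ℝ 2 f) (hg : ∀ i, ContDiff ℝ 2 (g i)) (hh : ∀ j, ContDiff ℝ 2 (h j))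
    (hG : ∀ k, ContDiff ℝ 2 (G k)) (hH : ∀ k, ContDiff ℝ 2 (H k))
    (xb : Vec n) (hxb : xb ∈ Feas g h G H)
    (hopt : LocallyOptimal f g h G H xb) (hS : SStationary f g h G H xb)
    (hcq : WCR g h G H xb) :
    ∀ (lam : Fin m → ℝ) (ρ : Fin p → ℝ) (μ ν : Fin l → ℝ),
      SStationarySystem f g h G H xb lam ρ μ ν →
      ∀ d ∈ CritSubspace g h G H xb,
        0 ≤ hessForm (lagr f g h G H lam ρ μ ν) xb d :=
  wsonc_under_wcr_general f g h G H hf hg hh hG hH xb hopt hcq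

end MPSC
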